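/- arXiv:2202.00947 — 8 statements merged into one kernel-verified Lean document; each statement's English description precedes it below -/
import Mathlib

section
/- Let Y be a closed subspace of a real Banach space X. If for every x* ∈ X* that attains its norm at some point of the unit sphere of Y, the only best approximation to x* from Y⊥ is 0 (i.e., P_{Y⊥}(x*) = {0}), then every y* ∈ Y* attaining its norm on the unit sphere of Y has a unique norm-preserving extension to X. -/
/-! Two norm-preserving extensions `f, F` of `g` differ by an element of `Y⊥`, and
`‖f - (f - F)‖ = ‖g‖ = dist(f, Y⊥)` (Hahn–Banach), so `f - F` is a best approximation to `f`
from `Y⊥`. Since `f` attains its norm wherever `g` does, the hypothesis forces `f - F = 0`. -/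

open NormedSpace Metric Set

namespace Paper

variable {X : Type*} [NormedAddCommGroup X] [NormedSpace ℝ X]

/-- The restriction of a continuous linear functional to a subspace. -/
noncomputable def restr (Y : Submodule ℝ X) (f : StrongDual ℝ X) : StrongDual ℝ ↥Y :=
  f.comp Y.subtypeL

/-- The annihilator `Y⊥` of a subspace `Y` in the dual. -/
def ann (Y : Submodule ℝ X) : Set (StrongDual ℝ X) := {f | ∀ y ∈ Y, f y = 0}

/-- The set of norm-preserving (Hahn–Banach) extensions of `g : Y* ` to `X`. -/
def HB (Y : Submodule ℝ X) (g : StrongDual ℝ ↥Y) : Set (StrongDual ℝ X) :=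
  {f | (∀ y : Y, f (y : X) = g y) ∧ ‖f‖ = ‖g‖}

/-- Best approximations to `x` from a set `A`. -/
def bestApprox {E : Type*} [NormedAddCommGroup E] (A : Set E) (x : E) : Set E :=
  {z ∈ A | ‖x - z‖ = infDist x A}

/-- Property-(U): every functional on `Y` has a unique norm-preserving extension to `X`. -/
def propU (Y : Submodule ℝ X) : Prop :=
  ∀ g : StrongDual ℝ ↥Y, ∃! f : StrongDual ℝ X, f ∈ HB Y g

/-- `Y# `: the set of functionals whose norm equals the norm of their restriction to `Y`. -/
def sharp (Y : Submodule ℝ X) : Set (StrongDual ℝ X) := {f | ‖f‖ = ‖restr Y f‖}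

/-- Property-(HB), stated via the decomposition `X* = Y# ⊕ Y⊥`. -/
def propHB (Y : Submodule ℝ X) : Prop :=
  (∀ f ∈ sharp Y, ∀ g ∈ sharp Y, f + g ∈ sharp Y) ∧
  (∀ (c : ℝ), ∀ f ∈ sharp Y, c • f ∈ sharp Y) ∧
  (∀ f : StrongDual ℝ X, ∃ g ∈ sharp Y, ∃ h ∈ ann Y, f = g + h) ∧
  (∀ g ∈ sharp Y, ∀ h ∈ ann Y, h ≠ 0 → ‖g‖ < ‖g + h‖ ∧ ‖h‖ ≤ ‖g + h‖)

variable {Y : Submodule ℝ X}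

theorem zero_mem_ann : (0 : StrongDual ℝ X) ∈ ann Y := fun _ _ => rfl

theorem norm_restr_le (f : StrongDual ℝ X) : ‖restr Y f‖ ≤ ‖f‖ :=
  (f.opNorm_comp_le _).trans (mul_le_of_le_one_right (norm_nonneg f) Y.norm_subtypeL_le)

theorem restr_sub_of_mem_ann (f : StrongDual ℝ X) {z : StrongDual ℝ X} (hz : z ∈ ann Y) :
    restr Y (f - z) = restr Y f := by
  ext y
  simp [restr, hz y y.2]

theorem sub_mem_ann_of_restr_eq {f F : StrongDual ℝ X} (h : restr Y f = restr Y F) :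
    f - F ∈ ann Y := fun y hy => by
  simpa [restr, sub_eq_zero] using congrArg (fun g => g ⟨y, hy⟩) h

theorem nonempty_HB (g : StrongDual ℝ Y) : (HB Y g).Nonempty :=
  exists_extension_norm_eq Y g

theorem infDist_ann_eq_norm_restr (f : StrongDual ℝ X) : infDist f (ann Y) = ‖restr Y f‖ := by
  obtain ⟨F, hF, hFnorm⟩ := nonempty_HB (restr Y f)
  apply le_antisymm
  · have hmem : f - F ∈ ann Y := sub_mem_ann_of_restr_eq (ContinuousLinearMap.ext fun y => (hF y).symm)
    calc infDist f (ann Y) ≤ dist f (f - F) := infDist_le_dist_of_mem hmem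
      _ = ‖restr Y f‖ := by rw [dist_eq_norm, sub_sub_cancel, hFnorm]
  · refine (le_infDist ⟨0, zero_mem_ann⟩).mpr fun z hz => ?_
    calc ‖restr Y f‖ = ‖restr Y (f - z)‖ := by rw [restr_sub_of_mem_ann f hz]
      _ ≤ ‖f - z‖ := norm_restr_le _
      _ = dist f z := (dist_eq_norm f z).symm

theorem restr_eq_of_mem_HB {g : StrongDual ℝ Y} {f : StrongDual ℝ X} (hf : f ∈ HB Y g) :
    restr Y f = g :=
  ContinuousLinearMap.ext hf.1

theorem apply_eq_norm_of_mem_HB {g : StrongDual ℝ Y} {f : StrongDual ℝ X} (hf : f ∈ HB Y g)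
    {y : Y} (hy : g y = ‖g‖) : f y = ‖f‖ := by
  rw [hf.1, hy, hf.2]

theorem sub_mem_bestApprox_of_mem_HB {g : StrongDual ℝ Y} {f F : StrongDual ℝ X}
    (hf : f ∈ HB Y g) (hF : F ∈ HB Y g) : f - F ∈ bestApprox (ann Y) f := by
  refine ⟨sub_mem_ann_of_restr_eq ?_, ?_⟩
  · rw [restr_eq_of_mem_HB hf, restr_eq_of_mem_HB hF]
  · rw [sub_sub_cancel, infDist_ann_eq_norm_restr, restr_eq_of_mem_HB hf, hF.2]

end Paper

open Paper

theorem stmt0_general {X : Type*} [NormedAddCommGroup X] [NormedSpace ℝ X]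
    (Y : Submodule ℝ X)
    (h : ∀ f : StrongDual ℝ X, (∃ y : Y, ‖(y : X)‖ = 1 ∧ f (y : X) = ‖f‖) →
      bestApprox (ann Y) f = {0}) :
    ∀ g : StrongDual ℝ ↥Y, (∃ y : Y, ‖(y : X)‖ = 1 ∧ g y = ‖g‖) →
      ∃! f : StrongDual ℝ X, f ∈ HB Y g := by
  rintro g ⟨y, hy, hgy⟩
  obtain ⟨F, hF⟩ := nonempty_HB g
  refine ⟨F, hF, fun f hf => ?_⟩
  have hbest : bestApprox (ann Y) f = {0} := h f ⟨y, hy, apply_eq_norm_of_mem_HB hf hgy⟩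
  have hdiff : f - F ∈ bestApprox (ann Y) f := sub_mem_bestApprox_of_mem_HB hf hF
  rw [hbest, mem_singleton_iff, sub_eq_zero] at hdiff
  exact hdiff

/-- if every `x* ∈ X*` attaining its norm on the unit sphere of `Y` has `0` as
its unique best approximation from `Y⊥`, then every norm-attaining `y* ∈ Y*` has a unique
norm-preserving extension to `X`. -/
theorem stmt0 {X : Type*} [NormedAddCommGroup X] [NormedSpace ℝ X] [CompleteSpace X]
    (Y : Submodule ℝ X) (hYc : IsClosed (Y : Set X))
    (h : ∀ f : StrongDual ℝ X, (∃ y : Y, ‖(y : X)‖ = 1 ∧ f (y : X) = ‖f‖) →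
      bestApprox (ann Y) f = {0}) :
    ∀ g : StrongDual ℝ ↥Y, (∃ y : Y, ‖(y : X)‖ = 1 ∧ g y = ‖g‖) →
      ∃! f : StrongDual ℝ X, f ∈ HB Y g :=
  stmt0_general Y h
end

section
/- Let Y be a closed subspace of a real Banach space X. If Y has property-(U) in X, then for every nonzero closed subspace Z of Y, the quotient Y/Z has property-(U) in X/Z. -/
/-!
A functional `g` on `Y/Z` pulls back along `Y → Y/Z` to a functional on `Y` of the same norm,
because the quotient norm is an infimum over representatives. The unique norm-preserving
extension `f` of this pullback vanishes on `Z`, hence descends to `X/Z` without changing its norm.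
Composition with `X → X/Z` is injective and norm preserving, and it carries norm-preserving
extensions of `g` exactly to norm-preserving extensions of its pullback, so uniqueness transfers.
-/

open NormedSpace Metric Set

open Paper

open Filter Topology

namespace ContinuousLinearMap

variable {𝕜 E F G : Type*} [NontriviallyNormedField 𝕜]
  [SeminormedAddCommGroup E] [SeminormedAddCommGroup F] [SeminormedAddCommGroup G]
  [NormedSpace 𝕜 E] [NormedSpace 𝕜 F] [NormedSpace 𝕜 G]

theorem opNorm_comp_eq_of_exists_lift (π : E →L[𝕜] F) (hπ : ‖π‖ ≤ 1)
    (hlift : ∀ (w : F) {ε : ℝ}, 0 < ε → ∃ x, π x = w ∧ ‖x‖ < ‖w‖ + ε) (f : F →L[𝕜] G) :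
    ‖f.comp π‖ = ‖f‖ := by
  refine le_antisymm ?_ (f.opNorm_le_bound (norm_nonneg _) fun w ↦ ?_)
  · exact (f.opNorm_comp_le π).trans (mul_le_of_le_one_right (norm_nonneg f) hπ)
  have hbound : ∀ ε > 0, ‖f w‖ ≤ ‖f.comp π‖ * (‖w‖ + ε) := fun ε hε ↦ by
    obtain ⟨x, rfl, hx⟩ := hlift w hε
    exact ((f.comp π).le_opNorm x).trans (by gcongr)
  have hlim : Tendsto (fun ε ↦ ‖f.comp π‖ * (‖w‖ + ε)) (𝓝[>] 0) (𝓝 (‖f.comp π‖ * ‖w‖)) :=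
    tendsto_nhdsWithin_of_tendsto_nhds <| by
      simpa using ((continuous_const.add continuous_id).const_mul ‖f.comp π‖).tendsto (0 : ℝ)
  exact ge_of_tendsto hlim (eventually_nhdsWithin_of_forall hbound)

end ContinuousLinearMap

namespace Submodule

variable {𝕜 E G : Type*} [NontriviallyNormedField 𝕜]
  [SeminormedAddCommGroup E] [SeminormedAddCommGroup G] [NormedSpace 𝕜 E] [NormedSpace 𝕜 G]
  (Z Y : Submodule 𝕜 E)

theorem norm_mkQL_le : ‖Z.mkQL‖ ≤ 1 :=
  Z.mkQL.opNorm_le_bound zero_le_one fun x ↦ by simpa using Quotient.norm_mk_le Z x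

theorem norm_comp_mkQL (f : E ⧸ Z →L[𝕜] G) : ‖f.comp Z.mkQL‖ = ‖f‖ :=
  Z.mkQL.opNorm_comp_eq_of_exists_lift Z.norm_mkQL_le (fun w _ hε ↦ Quotient.norm_mk_lt w hε) f

/-- The quotient map `Y → Y ⧸ Z`, realised inside `E ⧸ Z` as `Y.map Z.mkQ`. -/
def mkQLRestrict : Y →L[𝕜] Y.map Z.mkQ :=
  (Z.mkQL.comp Y.subtypeL).codRestrict (Y.map Z.mkQ) fun y ↦ mem_map_of_mem y.2

@[simp]
theorem coe_mkQLRestrict_apply (y : Y) : (Z.mkQLRestrict Y y : E ⧸ Z) = Z.mkQ y := rfl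

variable {Z Y}

theorem exists_mkQLRestrict_eq_norm_lt (hZY : Z ≤ Y) (w : Y.map Z.mkQ) {ε : ℝ} (hε : 0 < ε) :
    ∃ y, Z.mkQLRestrict Y y = w ∧ ‖y‖ < ‖w‖ + ε := by
  obtain ⟨x, hx, hxε⟩ := Quotient.norm_mk_lt (w : E ⧸ Z) hε
  have hxY : x ∈ Y := by
    have hx' : x ∈ (Y.map Z.mkQ).comap Z.mkQ := by rw [mem_comap, mkQ_apply, hx]; exact w.2
    rwa [comap_map_mkQ, sup_eq_right.2 hZY] at hx'
  exact ⟨⟨x, hxY⟩, Subtype.ext hx, hxε⟩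

theorem norm_comp_mkQLRestrict (hZY : Z ≤ Y) (g : Y.map Z.mkQ →L[𝕜] G) :
    ‖g.comp (Z.mkQLRestrict Y)‖ = ‖g‖ := by
  refine (Z.mkQLRestrict Y).opNorm_comp_eq_of_exists_lift ?_
    (fun w _ hε ↦ exists_mkQLRestrict_eq_norm_lt hZY w hε) g
  exact ContinuousLinearMap.opNorm_le_bound _ zero_le_one fun y ↦ by
    simpa using Quotient.norm_mk_le Z (y : E)

theorem mkQLRestrict_surjective (hZY : Z ≤ Y) : Function.Surjective (Z.mkQLRestrict Y) :=
  fun w ↦ (exists_mkQLRestrict_eq_norm_lt hZY w one_pos).imp fun _ ↦ And.left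

end Submodule

theorem Submodule.comp_mkQL_injective {𝕜 E G : Type*} [Ring 𝕜] [TopologicalSpace E] [AddCommGroup E]
    [Module 𝕜 E] [TopologicalSpace G] [AddCommGroup G] [Module 𝕜 G] (Z : Submodule 𝕜 E) :
    Function.Injective fun F : E ⧸ Z →L[𝕜] G ↦ F.comp Z.mkQL :=
  fun _ _ h ↦ ContinuousLinearMap.ext fun w ↦ by
    obtain ⟨x, rfl⟩ := Z.mkQ_surjective w
    exact DFunLike.congr_fun h x

namespace Paper

variable {X : Type*} [NormedAddCommGroup X] [NormedSpace ℝ X] {Y Z : Submodule ℝ X}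
  [IsClosed (Z : Set X)]

theorem comp_mkQL_mem_HB_iff (hZY : Z ≤ Y) {g : StrongDual ℝ (Y.map Z.mkQ)}
    {F : StrongDual ℝ (X ⧸ Z)} :
    F.comp Z.mkQL ∈ HB Y (g.comp (Z.mkQLRestrict Y)) ↔ F ∈ HB (Y.map Z.mkQ) g := by
  simp only [HB, mem_ofPred_eq, Z.norm_comp_mkQL, Submodule.norm_comp_mkQLRestrict hZY,
    (Submodule.mkQLRestrict_surjective hZY).forall]
  rfl

end Paper

theorem stmt3_general {X : Type*} [NormedAddCommGroup X] [NormedSpace ℝ X]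
    (Y : Submodule ℝ X) (hU : propU Y) :
    ∀ Z : Submodule ℝ X, Z ≤ Y → Z ≠ ⊥ →
      ∀ [IsClosed (Z : Set X)], propU (X := X ⧸ Z) (Y.map Z.mkQ) := by
  intro Z hZY _ _ g
  obtain ⟨f, hf, hf_unique⟩ := hU (g.comp (Z.mkQLRestrict Y))
  have hfZ : Z ≤ (f : X →ₗ[ℝ] ℝ).ker := fun z hz ↦ by
    have : Z.mkQLRestrict Y ⟨z, hZY hz⟩ = 0 := Subtype.ext ((Submodule.Quotient.mk_eq_zero Z).2 hz)
    simpa [this] using hf.1 ⟨z, hZY hz⟩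
  refine ⟨Z.liftQL f hfZ, (comp_mkQL_mem_HB_iff hZY).1 hf, fun F hF ↦ ?_⟩
  exact Z.comp_mkQL_injective (hf_unique _ ((comp_mkQL_mem_HB_iff hZY).2 hF))

/-- if `Y` has property-(U) in `X`, then for every nonzero closed subspace
`Z ⊆ Y` the quotient `Y/Z` has property-(U) in `X/Z`. -/
theorem stmt3 {X : Type*} [NormedAddCommGroup X] [NormedSpace ℝ X] [CompleteSpace X]
    (Y : Submodule ℝ X) (hYc : IsClosed (Y : Set X)) (hU : propU Y) :
    ∀ Z : Submodule ℝ X, Z ≤ Y → Z ≠ ⊥ →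
      ∀ [IsClosed (Z : Set X)], propU (X := X ⧸ Z) (Y.map Z.mkQ) :=
  stmt3_general Y hU
end

section
/- Let Y be a closed subspace of a real Banach space X with property-(SU), i.e., Y# = {x* ∈ X* : ‖x*‖ = ‖x*|_Y‖} is a linear subspace and X* = Y# ⊕ Y⊥ with ‖y# + y⊥‖ > ‖y#‖ whenever y⊥ ≠ 0. Then Y⊥ is a Chebyshev subspace of X* and the metric projection P_{Y⊥} : X* → Y⊥ is a linear projection. -/
open NormedSpace Metric Set

open Paper

/-!
Once `Y#` is a subspace, the decomposition `X* = Y# ⊕ Y⊥` is a direct sum, since the strict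
inequality applied to `-k` and `k` rules out a nonzero `k ∈ Y# ∩ Y⊥`. Let `P` be the linear
projection onto `Y⊥` along `Y#`. For `f ∈ X*` and `z ∈ Y⊥` with `z ≠ P f`, write
`f - z = (f - P f) + (P f - z)` with `f - P f ∈ Y#` and `0 ≠ P f - z ∈ Y⊥`; the strict inequality
gives `‖f - P f‖ < ‖f - z‖`, so `P f` is the unique nearest point of `Y⊥` to `f`.
-/

namespace Paper

theorem bestApprox_eq_singleton_of_forall_norm_sub_lt {E : Type*} [NormedAddCommGroup E]
    {A : Set E} {x z₀ : E} (hz₀ : z₀ ∈ A) (hlt : ∀ z ∈ A, z ≠ z₀ → ‖x - z₀‖ < ‖x - z‖) :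
    bestApprox A x = {z₀} := by
  have hinf : infDist x A = ‖x - z₀‖ := by
    refine le_antisymm ((infDist_le_dist_of_mem hz₀).trans_eq (dist_eq_norm x z₀)) ?_
    refine (le_infDist ⟨z₀, hz₀⟩).2 fun z hz => ?_
    rw [dist_eq_norm]
    rcases eq_or_ne z z₀ with rfl | hne
    · exact le_rfl
    · exact (hlt z hz hne).le
  ext z
  simp only [bestApprox, mem_ofPred_eq, mem_singleton_iff, hinf]
  constructor
  · rintro ⟨hz, hnorm⟩
    by_contra hne
    exact (hlt z hz hne).ne' hnorm
  · rintro rfl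
    exact ⟨hz₀, rfl⟩

section Complement

variable {R E : Type*} [Ring R] [NormedAddCommGroup E] [Module R E] {S A : Submodule R E}

theorem disjoint_of_norm_lt_norm_add (hstrict : ∀ s ∈ S, ∀ a ∈ A, a ≠ 0 → ‖s‖ < ‖s + a‖) :
    Disjoint S A := by
  refine Submodule.disjoint_def.2 fun k hkS hkA => ?_
  by_contra hk
  have := hstrict (-k) (S.neg_mem hkS) k hkA hk
  rw [neg_add_cancel, norm_zero, norm_neg] at this
  exact (norm_nonneg k).not_gt this

theorem bestApprox_eq_singleton_projection (hSA : IsCompl S A)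
    (hstrict : ∀ s ∈ S, ∀ a ∈ A, a ≠ 0 → ‖s‖ < ‖s + a‖) (x : E) :
    bestApprox A x = {A.projection S hSA.symm x} := by
  set P := A.projection S hSA.symm
  have hPx : P x ∈ A := Submodule.projection_apply_mem _ x
  have hxP : x - P x ∈ S := by
    rw [Submodule.projection_eq_self_sub_projection hSA, sub_sub_cancel]
    exact Submodule.projection_apply_mem _ x
  refine bestApprox_eq_singleton_of_forall_norm_sub_lt hPx fun z hz hne => ?_
  calc ‖x - P x‖ < ‖(x - P x) + (P x - z)‖ :=
        hstrict _ hxP _ (A.sub_mem hPx hz) (sub_ne_zero.2 hne.symm)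
    _ = ‖x - z‖ := by rw [sub_add_sub_cancel]

end Complement

variable {X : Type*} [NormedAddCommGroup X] [NormedSpace ℝ X]

theorem coe_polarSubmodule (Y : Submodule ℝ X) :
    (StrongDual.polarSubmodule ℝ Y : Set (StrongDual ℝ X)) = ann Y :=
  StrongDual.polarSubmodule_eq_setOfPred ℝ Y

def sharpSubmodule (Y : Submodule ℝ X)
    (hadd : ∀ f ∈ sharp Y, ∀ g ∈ sharp Y, f + g ∈ sharp Y)
    (hsmul : ∀ (c : ℝ), ∀ f ∈ sharp Y, c • f ∈ sharp Y) : Submodule ℝ (StrongDual ℝ X) where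
  carrier := sharp Y
  add_mem' {f g} hf hg := hadd f hf g hg
  zero_mem' := by simp [sharp, restr, ContinuousLinearMap.opNorm_zero]
  smul_mem' := hsmul

theorem coe_sharpSubmodule (Y : Submodule ℝ X)
    (hadd : ∀ f ∈ sharp Y, ∀ g ∈ sharp Y, f + g ∈ sharp Y)
    (hsmul : ∀ (c : ℝ), ∀ f ∈ sharp Y, c • f ∈ sharp Y) :
    (sharpSubmodule Y hadd hsmul : Set (StrongDual ℝ X)) = sharp Y :=
  rfl

end Paper

theorem stmt5_general {X : Type*} [NormedAddCommGroup X] [NormedSpace ℝ X]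
    (Y : Submodule ℝ X)
    (hadd : ∀ f ∈ sharp Y, ∀ g ∈ sharp Y, f + g ∈ sharp Y)
    (hsmul : ∀ (c : ℝ), ∀ f ∈ sharp Y, c • f ∈ sharp Y)
    (hdec : ∀ f : StrongDual ℝ X, ∃ g ∈ sharp Y, ∃ h ∈ ann Y, f = g + h)
    (hstrict : ∀ g ∈ sharp Y, ∀ h ∈ ann Y, h ≠ 0 → ‖g‖ < ‖g + h‖) :
    ∃ P : StrongDual ℝ X →ₗ[ℝ] StrongDual ℝ X,
      ∀ f : StrongDual ℝ X, bestApprox (ann Y) f = {P f} := by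
  set S := sharpSubmodule Y hadd hsmul
  set A := StrongDual.polarSubmodule ℝ Y
  have hS : (S : Set (StrongDual ℝ X)) = sharp Y := coe_sharpSubmodule Y hadd hsmul
  have hA : (A : Set (StrongDual ℝ X)) = ann Y := coe_polarSubmodule Y
  have hstrict' : ∀ g ∈ S, ∀ h ∈ A, h ≠ 0 → ‖g‖ < ‖g + h‖ := by
    simpa only [← SetLike.mem_coe, hS, hA] using hstrict
  have hcodisj : Codisjoint S A := Submodule.codisjoint_iff_exists_add_eq.2 fun f => by
    obtain ⟨g, hg, h, hh, rfl⟩ := hdec f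
    exact ⟨g, h, hS.ge hg, hA.ge hh, rfl⟩
  have hSA : IsCompl S A := ⟨disjoint_of_norm_lt_norm_add hstrict', hcodisj⟩
  refine ⟨A.projection S hSA.symm, fun f => ?_⟩
  rw [← hA]
  exact bestApprox_eq_singleton_projection hSA hstrict' f

/-- if `Y` has property-(SU) in `X`, i.e. `Y#` is a linear subspace,
`X* = Y# ⊕ Y⊥`, and `‖g + h‖ > ‖g‖` for `g ∈ Y#`, `0 ≠ h ∈ Y⊥`, then `Y⊥` is Chebyshev
in `X*` and the metric projection onto `Y⊥` is a linear projection. -/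
theorem stmt5 {X : Type*} [NormedAddCommGroup X] [NormedSpace ℝ X] [CompleteSpace X]
    (Y : Submodule ℝ X) (hYc : IsClosed (Y : Set X))
    (hadd : ∀ f ∈ sharp Y, ∀ g ∈ sharp Y, f + g ∈ sharp Y)
    (hsmul : ∀ (c : ℝ), ∀ f ∈ sharp Y, c • f ∈ sharp Y)
    (hdec : ∀ f : StrongDual ℝ X, ∃ g ∈ sharp Y, ∃ h ∈ ann Y, f = g + h)
    (hstrict : ∀ g ∈ sharp Y, ∀ h ∈ ann Y, h ≠ 0 → ‖g‖ < ‖g + h‖) :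
    ∃ P : StrongDual ℝ X →ₗ[ℝ] StrongDual ℝ X,
      ∀ f : StrongDual ℝ X, bestApprox (ann Y) f = {P f} :=
  stmt5_general Y hadd hsmul hdec hstrict
end

section
/- Let X, Z be real Banach spaces and Y a closed subspace of Z with property-(SU) in Z. If S : X → Y* is a linear isometry, viewed as a functional on X ⊗̂_π Y, then S has a unique norm-preserving extension to X ⊗̂_π Z. -/
open NormedSpace Metric Set

open Paper

namespace Paper

/-- Property-(SU): there is a contractive projection `P` of the dual onto `Y⊥` such that
`‖g + h‖ > ‖g‖` whenever `g ∈ G = (I − P)(X*)` and `0 ≠ h ∈ Y⊥`. -/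
def propSU {X : Type*} [NormedAddCommGroup X] [NormedSpace ℝ X] (Y : Submodule ℝ X) : Prop :=
  ∃ P : StrongDual ℝ X →L[ℝ] StrongDual ℝ X,
    (∀ f : StrongDual ℝ X, P f ∈ ann Y) ∧ (∀ h ∈ ann Y, P h = h) ∧ ‖P‖ ≤ 1 ∧
    ∀ f : StrongDual ℝ X, ∀ h ∈ ann Y, h ≠ 0 → ‖f - P f‖ < ‖(f - P f) + h‖

end Paper

/-!
Under property-(SU) with projection `P`, every norm-preserving extension `f` of a functional on `Y`
lies in `ker P`: otherwise `f = (f - P f) + P f` with `P f ∈ Y⊥` nonzero would give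
`‖f‖ > ‖f - P f‖ ≥ ‖f|_Y‖`. Since `P` fixes `Y⊥`, two elements of `ker P` that agree on `Y`
coincide. Hence the (unique) Hahn–Banach extension map `E : Y* → Z*` takes values in `ker P`, so
it is linear, and it is an isometry. Then `T = E ∘ S` extends `S` with `‖T‖ = ‖S‖`. Conversely,
if `T'` is such an extension then `‖T' x‖ ≤ ‖S‖ ‖x‖ ≤ ‖x‖ = ‖S x‖` because `S` is an isometry,
so `T' x` is a norm-preserving extension of `S x` and equals `E (S x)`.
-/

namespace Paper

variable {Z : Type*} [NormedAddCommGroup Z] [NormedSpace ℝ Z] {Y : Submodule ℝ Z}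

theorem norm_le_of_forall_apply_eq {g : StrongDual ℝ Y} {f : StrongDual ℝ Z}
    (hf : ∀ y : Y, f y = g y) : ‖g‖ ≤ ‖f‖ :=
  g.opNorm_le_bound (norm_nonneg f) fun y => by rw [← hf y]; exact f.le_opNorm y

section Projection

variable {P : StrongDual ℝ Z →L[ℝ] StrongDual ℝ Z}

theorem apply_eq_zero_of_mem_HB (hPann : ∀ f, P f ∈ ann Y)
    (hPstrict : ∀ f : StrongDual ℝ Z, ∀ h ∈ ann Y, h ≠ 0 → ‖f - P f‖ < ‖(f - P f) + h‖)
    {g : StrongDual ℝ Y} {f : StrongDual ℝ Z} (hf : f ∈ HB Y g) : P f = 0 := by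
  by_contra hPf
  have hlt := hPstrict f (P f) (hPann f) hPf
  rw [sub_add_cancel, hf.2] at hlt
  have hle : ‖g‖ ≤ ‖f - P f‖ :=
    norm_le_of_forall_apply_eq fun y => by simp [hPann f y y.2, hf.1 y]
  exact hlt.not_ge hle

theorem eq_of_apply_eq_zero_of_forall_apply_eq (hPfix : ∀ h ∈ ann Y, P h = h)
    {f₁ f₂ : StrongDual ℝ Z} (h₁ : P f₁ = 0) (h₂ : P f₂ = 0) (hY : ∀ y : Y, f₁ y = f₂ y) :
    f₁ = f₂ := by
  have hfix := hPfix (f₁ - f₂) fun z hz => sub_eq_zero.2 (hY ⟨z, hz⟩)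
  rw [map_sub, h₁, h₂, sub_self] at hfix
  exact sub_eq_zero.1 hfix.symm

end Projection

theorem propSU.exists_submodule_HB_subset_eq_of_eqOn (hSU : propSU Y) :
    ∃ K : Submodule ℝ (StrongDual ℝ Z), (∀ g, HB Y g ⊆ K) ∧
      ∀ f₁ ∈ K, ∀ f₂ ∈ K, (∀ y : Y, f₁ y = f₂ y) → f₁ = f₂ := by
  obtain ⟨P, hPann, hPfix, -, hPstrict⟩ := hSU
  exact ⟨LinearMap.ker P.toLinearMap, fun _ _ => apply_eq_zero_of_mem_HB hPann hPstrict,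
    fun _ h₁ _ h₂ => eq_of_apply_eq_zero_of_forall_apply_eq hPfix h₁ h₂⟩

theorem propSU.propU (hSU : propSU Y) : propU Y := by
  obtain ⟨K, hHB, hinj⟩ := hSU.exists_submodule_HB_subset_eq_of_eqOn
  intro g
  obtain ⟨f, hfY, hfnorm⟩ := exists_extension_norm_eq Y g
  refine ⟨f, ⟨hfY, hfnorm⟩, fun f' hf' =>
    hinj _ (hHB g hf') _ (hHB g ⟨hfY, hfnorm⟩) fun y => by rw [hf'.1, hfY]⟩

noncomputable def propSU.extend (hSU : propSU Y) : StrongDual ℝ Y →ₗᵢ[ℝ] StrongDual ℝ Z where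
  toFun g := (hSU.propU g).exists.choose
  map_add' g₁ g₂ := by
    obtain ⟨K, hHB, hinj⟩ := hSU.exists_submodule_HB_subset_eq_of_eqOn
    have hspec := fun g => (hSU.propU g).exists.choose_spec
    refine hinj _ (hHB _ (hspec _)) _ (K.add_mem (hHB _ (hspec g₁)) (hHB _ (hspec g₂))) fun y => ?_
    simp only [add_apply, (hspec _).1]
  map_smul' c g := by
    obtain ⟨K, hHB, hinj⟩ := hSU.exists_submodule_HB_subset_eq_of_eqOn
    have hspec := fun g => (hSU.propU g).exists.choose_spec
    refine hinj _ (hHB _ (hspec _)) _ (K.smul_mem c (hHB _ (hspec g))) fun y => ?_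
    simp only [smul_apply, (hspec _).1, RingHom.id_apply]
  norm_map' g := (hSU.propU g).exists.choose_spec.2

theorem propSU.extend_mem_HB (hSU : propSU Y) (g : StrongDual ℝ Y) : hSU.extend g ∈ HB Y g :=
  (hSU.propU g).exists.choose_spec

theorem propSU.eq_extend_of_mem_HB (hSU : propSU Y) {g : StrongDual ℝ Y} {f : StrongDual ℝ Z}
    (hf : f ∈ HB Y g) : f = hSU.extend g :=
  (hSU.propU g).unique hf (hSU.extend_mem_HB g)

end Paper

theorem stmt9_general {X Z : Type*} [NormedAddCommGroup X] [NormedSpace ℝ X]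
    [NormedAddCommGroup Z] [NormedSpace ℝ Z]
    (Y : Submodule ℝ Z) (hSU : propSU Y)
    (S : X →L[ℝ] StrongDual ℝ ↥Y) (hiso : ∀ x : X, ‖S x‖ = ‖x‖) :
    ∃! T : X →L[ℝ] StrongDual ℝ Z,
      (∀ x : X, ∀ y : Y, T x (y : Z) = S x y) ∧ ‖T‖ =
        @norm _ (@ContinuousLinearMap.hasOpNorm ℝ ℝ X (StrongDual ℝ ↥Y) _ _ _ _ _ _ (RingHom.id ℝ)) S := by
  -- without these local instances, synthesizing the operator norm on `X →L[ℝ] StrongDual ℝ Y` fails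
  let : NormedAddCommGroup (StrongDual ℝ Y) := inferInstance
  let : NormedSpace ℝ (StrongDual ℝ Y) := inferInstance
  have hS : ‖S‖ ≤ 1 := S.opNorm_le_bound zero_le_one fun x => by rw [hiso, one_mul]
  refine ⟨hSU.extend.toContinuousLinearMap.comp S,
    ⟨fun x => (hSU.extend_mem_HB (S x)).1, hSU.extend.norm_toContinuousLinearMap_comp⟩, ?_⟩
  rintro T ⟨hTY, hTnorm⟩
  ext1 x
  refine hSU.eq_extend_of_mem_HB ⟨hTY x, le_antisymm ?_ (norm_le_of_forall_apply_eq (hTY x))⟩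
  calc ‖T x‖ ≤ ‖T‖ * ‖x‖ := T.le_opNorm x
    _ ≤ ‖x‖ := by rw [hTnorm]; exact mul_le_of_le_one_left (norm_nonneg x) hS
    _ = ‖S x‖ := (hiso x).symm

/-- if `Y` has property-(SU) in `Z` and `S : X → Y*` is a linear isometry,
viewed (via `(X ⊗̂_π Y)* ≅ L(X, Y*)`) as a functional on `X ⊗̂_π Y`, then `S` has a unique
norm-preserving extension to `X ⊗̂_π Z`, i.e. there is a unique `T ∈ L(X, Z*) ≅ (X ⊗̂_π Z)*`
with `T x∣_Y = S x` for all `x` and `‖T‖ = ‖S‖`. -/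
theorem stmt9 {X Z : Type*} [NormedAddCommGroup X] [NormedSpace ℝ X] [CompleteSpace X]
    [NormedAddCommGroup Z] [NormedSpace ℝ Z] [CompleteSpace Z]
    (Y : Submodule ℝ Z) (hYc : IsClosed (Y : Set Z)) (hSU : propSU Y)
    (S : X →L[ℝ] StrongDual ℝ ↥Y) (hiso : ∀ x : X, ‖S x‖ = ‖x‖) :
    ∃! T : X →L[ℝ] StrongDual ℝ Z,
      (∀ x : X, ∀ y : Y, T x (y : Z) = S x y) ∧ ‖T‖ =
        @norm _ (@ContinuousLinearMap.hasOpNorm ℝ ℝ X (StrongDual ℝ ↥Y) _ _ _ _ _ _ (RingHom.id ℝ)) S :=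
  stmt9_general Y hSU S hiso
end

section
/- Let W ⊆ Y ⊆ X be closed subspaces of a real Banach space X. If Y has property-(HB) in X, then Y/W has property-(HB) in X/W. -/
open NormedSpace Metric Set

open Paper

/-! Precomposition with the quotient map `π : X → X/W` identifies `(X/W)*` isometrically with
`W⊥ ⊆ X*`. Since `π` maps the open balls of `Y` onto those of `Y/W`, it also preserves the norms
of restrictions, so it carries `(Y/W)#` onto `Y# ∩ W⊥` and `(Y/W)⊥` onto `Y⊥`. As `Y⊥ ⊆ W⊥`, the
decomposition `X* = Y# ⊕ Y⊥` of a functional vanishing on `W` has both summands in `W⊥`, and all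
clauses of property-(HB) descend to `X/W`. -/

section OpNorm

variable {𝕜 E F G : Type*} [NontriviallyNormedField 𝕜]
  [SeminormedAddCommGroup E] [SeminormedAddCommGroup F] [SeminormedAddCommGroup G]
  [NormedSpace 𝕜 E] [NormedSpace 𝕜 F] [NormedSpace 𝕜 G]

theorem ContinuousLinearMap.opNorm_comp_eq_of_forall_norm_lt (f : F →L[𝕜] G) (T : E →L[𝕜] F)
    (hT : ∀ x, ‖T x‖ ≤ ‖x‖) (hlift : ∀ z r, ‖z‖ < r → ∃ x, T x = z ∧ ‖x‖ < r) :
    ‖f.comp T‖ = ‖f‖ := by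
  refine le_antisymm (f.opNorm_comp_le T |>.trans ?_) (f.opNorm_le_bound (norm_nonneg _) fun z ↦ ?_)
  · exact mul_le_of_le_one_right (norm_nonneg f) (T.opNorm_le_bound zero_le_one (by simpa using hT))
  · have hbound : ∀ r > ‖z‖, ‖f z‖ ≤ ‖f.comp T‖ * r := fun r hr ↦ by
      obtain ⟨x, rfl, hx⟩ := hlift z r hr
      exact ((f.comp T).le_opNorm x).trans (by gcongr)
    have hlim : Filter.Tendsto (fun r ↦ ‖f.comp T‖ * r) (nhdsWithin ‖z‖ (Ioi ‖z‖))
        (nhds (‖f.comp T‖ * ‖z‖)) :=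
      ((continuous_const.mul continuous_id).tendsto _).mono_left nhdsWithin_le_nhds
    exact ge_of_tendsto hlim (eventually_nhdsWithin_of_forall hbound)

theorem Submodule.opNorm_comp_mkQL (W : Submodule 𝕜 E) (f : E ⧸ W →L[𝕜] F) :
    ‖f.comp W.mkQL‖ = ‖f‖ :=
  f.opNorm_comp_eq_of_forall_norm_lt _ (Submodule.Quotient.norm_mk_le W)
    fun _ _ ↦ QuotientAddGroup.norm_lt_iff.mp

end OpNorm

namespace Paper

variable {X : Type*} [NormedAddCommGroup X] [NormedSpace ℝ X] {W Y : Submodule ℝ X}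
  [IsClosed (W : Set X)]

theorem norm_restr_comp_mkQL (hWY : W ≤ Y) (f : StrongDual ℝ (X ⧸ W)) :
    ‖restr Y (f.comp W.mkQL)‖ = ‖restr (Y.map W.mkQ) f‖ := by
  refine (restr (Y.map W.mkQ) f).opNorm_comp_eq_of_forall_norm_lt
    ((W.mkQL.comp Y.subtypeL).codRestrict _ fun y ↦ Submodule.mem_map_of_mem y.2)
    (fun y ↦ Submodule.Quotient.norm_mk_le W (y : X)) fun ⟨z, y, hy, hyz⟩ r hr ↦ ?_
  obtain ⟨x, hxz, hx⟩ := QuotientAddGroup.norm_lt_iff.mp hr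
  have hxY : x ∈ Y := by
    have : x - y ∈ W := (Submodule.Quotient.eq W).mp (hxz.trans hyz.symm)
    simpa using Y.add_mem (hWY this) hy
  exact ⟨⟨x, hxY⟩, Subtype.ext hxz, hx⟩

theorem comp_mkQL_mem_sharp_iff (hWY : W ≤ Y) {f : StrongDual ℝ (X ⧸ W)} :
    f.comp W.mkQL ∈ sharp Y ↔ f ∈ sharp (Y.map W.mkQ) := by
  simp only [sharp, mem_ofPred_eq, W.opNorm_comp_mkQL, norm_restr_comp_mkQL hWY]

theorem comp_mkQL_mem_ann_iff {f : StrongDual ℝ (X ⧸ W)} :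
    f.comp W.mkQL ∈ ann Y ↔ f ∈ ann (Y.map W.mkQ) := by
  simp [ann]

theorem exists_sharp_add_ann_map_mkQ (hWY : W ≤ Y)
    (hdecomp : ∀ f : StrongDual ℝ X, ∃ g ∈ sharp Y, ∃ h ∈ ann Y, f = g + h)
    (f : StrongDual ℝ (X ⧸ W)) :
    ∃ g ∈ sharp (Y.map W.mkQ), ∃ h ∈ ann (Y.map W.mkQ), f = g + h := by
  obtain ⟨g, hg, h, hh, hfgh⟩ := hdecomp (f.comp W.mkQL)
  have hhW : ∀ w ∈ W, h w = 0 := fun w hw ↦ hh w (hWY hw)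
  have hgW : ∀ w ∈ W, g w = 0 := fun w hw ↦ by
    have hfw : f.comp W.mkQL w = 0 := by simp [(Submodule.Quotient.mk_eq_zero W).mpr hw]
    simpa [hfgh, hhW w hw] using hfw
  obtain ⟨g', rfl⟩ : ∃ g', g'.comp W.mkQL = g := ⟨W.liftQL g hgW, rfl⟩
  obtain ⟨h', rfl⟩ : ∃ h', h'.comp W.mkQL = h := ⟨W.liftQL h hhW, rfl⟩
  refine ⟨g', (comp_mkQL_mem_sharp_iff hWY).mp hg, h', comp_mkQL_mem_ann_iff.mp hh, ?_⟩
  ext z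
  obtain ⟨x, rfl⟩ := W.mkQ_surjective z
  exact congr($hfgh x)

end Paper

theorem stmt10_general {X : Type*} [NormedAddCommGroup X] [NormedSpace ℝ X]
    (W Y : Submodule ℝ X) (hWY : W ≤ Y)
    [IsClosed (W : Set X)]
    (hHB : propHB Y) :
    propHB (X := X ⧸ W) (Y.map W.mkQ) := by
  obtain ⟨hadd, hsmul, hdecomp, hnorm⟩ := hHB
  have hsharp := fun f ↦ comp_mkQL_mem_sharp_iff (f := f) hWY
  refine ⟨fun f hf g hg ↦ ?_, fun c f hf ↦ ?_, exists_sharp_add_ann_map_mkQ hWY hdecomp,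
    fun g hg h hh hh0 ↦ ?_⟩
  · rw [← hsharp] at hf hg ⊢
    simpa only [ContinuousLinearMap.add_comp] using hadd _ hf _ hg
  · rw [← hsharp] at hf ⊢
    simpa only [ContinuousLinearMap.smul_comp] using hsmul c _ hf
  · rw [← hsharp] at hg
    rw [← comp_mkQL_mem_ann_iff] at hh
    rw [← norm_ne_zero_iff, ← W.opNorm_comp_mkQL, norm_ne_zero_iff] at hh0
    simpa only [← ContinuousLinearMap.add_comp, W.opNorm_comp_mkQL] using hnorm _ hg _ hh hh0

/-- if `W ⊆ Y ⊆ X` are closed subspaces and `Y` has property-(HB) in `X`,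
then `Y/W` has property-(HB) in `X/W`. -/
theorem stmt10 {X : Type*} [NormedAddCommGroup X] [NormedSpace ℝ X] [CompleteSpace X]
    (W Y : Submodule ℝ X) (hWY : W ≤ Y)
    [IsClosed (W : Set X)] (hYc : IsClosed (Y : Set X))
    (hHB : propHB Y) :
    propHB (X := X ⧸ W) (Y.map W.mkQ) :=
  stmt10_general W Y hWY hHB
end

section
/- Let n > m ≥ 1 and equip ℝⁿ with the norm ‖(x₁,…,xₙ)‖* = max{|x₁|, …, |x_{n−1}|, |x₁+⋯+xₙ|/n}. Let Y = span{e₁,…,e_m}. Then Y has property-(SU) in (ℝⁿ, ‖·‖*) but does not have property-(HB): with the dual norm ‖(a₁,…,aₙ)‖^* = Σ_{i=1}^{n−1}|aᵢ − aₙ| + n|aₙ|, the decomposition of (1,1,…,1) as (1,…,1,0,…,0) + (0,…,0,1,…,1) satisfies ‖(1,…,1)‖^* = n < n + m = ‖(0,…,0,1,…,1)‖^*. -/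
namespace Paper

/-- The dual norm `‖(a₁,…,a_{n+1})‖^* = Σ_{i≤n}|aᵢ − a_{n+1}| + (n+1)|a_{n+1}|` of the norm
`‖x‖_* = max{|x₁|,…,|xₙ|, |x₁+⋯+x_{n+1}|/(n+1)}` on `ℝ^{n+1}`. -/
def dualNorm (n : ℕ) (a : Fin (n + 1) → ℝ) : ℝ :=
  (∑ i : Fin n, |a i.castSucc - a (Fin.last n)|) + (n + 1) * |a (Fin.last n)|

end Paper

open Paper

/-- for `1 ≤ m < n+1`, the subspace `Y = span{e₁,…,e_m}` of
`(ℝ^{n+1}, ‖·‖_*)` has property-(SU): in the dual `(ℝ^{n+1}, ‖·‖^*)`, with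
`Y# = span{e₁,…,e_m}` and `Y⊥ = span{e_{m+1},…,e_{n+1}}`, one has `‖g + h‖^* > ‖g‖^*` for
`g ∈ Y#` and `0 ≠ h ∈ Y⊥`; but `Y` fails property-(HB), which would require
`‖g + h‖^* ≥ ‖h‖^*`: the decomposition of `(1,…,1)` as `(1,…,1,0,…,0) + (0,…,0,1,…,1)`
satisfies `‖(1,…,1)‖^* = n+1 < (n+1) + m = ‖(0,…,0,1,…,1)‖^*`. -/
theorem stmt14 (n m : ℕ) (hm : 1 ≤ m) (hmn : m < n + 1) :
    (∀ g h : Fin (n + 1) → ℝ, (∀ i : Fin (n + 1), m ≤ (i : ℕ) → g i = 0) →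
      (∀ i : Fin (n + 1), (i : ℕ) < m → h i = 0) → h ≠ 0 →
        dualNorm n g < dualNorm n (g + h)) ∧
    dualNorm n (fun _ => 1) = (n : ℝ) + 1 ∧
    dualNorm n (fun i => if (i : ℕ) < m then 0 else 1) = ((n : ℝ) + 1) + m ∧
    dualNorm n (fun _ => 1) < dualNorm n (fun i => if (i : ℕ) < m then 0 else 1) := by
  have hmn' : m ≤ n := Nat.lt_succ_iff.mp hmn
  have eq1 : dualNorm n (fun _ => (1:ℝ)) = (n : ℝ) + 1 := by
    simp [dualNorm]
  have eq2 : dualNorm n (fun i : Fin (n+1) => if (i : ℕ) < m then (0:ℝ) else 1)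
      = ((n : ℝ) + 1) + m := by
    have hlast : ¬ ((Fin.last n : ℕ) < m) := by simp [Fin.last]; omega
    simp only [dualNorm, hlast, if_false, abs_one, mul_one]
    have : ∀ i : Fin n, |(if ((i.castSucc : Fin (n+1)) : ℕ) < m then (0:ℝ) else 1) - 1|
        = if (i : ℕ) < m then (1:ℝ) else 0 := by
      intro i
      by_cases hi : (i : ℕ) < m <;> simp [Fin.castSucc, hi]
    rw [Finset.sum_congr rfl (fun i _ => this i)]
    rw [Fin.sum_univ_eq_sum_range (fun i => if i < m then (1:ℝ) else 0)]
    have hsplit : (∑ i ∈ Finset.range n, if i < m then (1:ℝ) else 0) = m := by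
      rw [Finset.range_eq_Ico, ← Finset.sum_Ico_consecutive _ (Nat.zero_le m) hmn']
      rw [Finset.sum_congr rfl (fun i hi => if_pos (Finset.mem_Ico.mp hi).2),
        Finset.sum_congr rfl (fun i hi => if_neg (not_lt.mpr (Finset.mem_Ico.mp hi).1))]
      simp
    rw [hsplit]; ring
  refine ⟨?_, eq1, eq2, by rw [eq1, eq2]; have h1 : (1:ℝ) ≤ m := (by exact_mod_cast hm); linarith⟩
  intro g h hg hh hne
  have hgL : g (Fin.last n) = 0 := hg _ (by simp [Fin.last]; omega)
  have key : ∀ i : Fin n, |g i.castSucc| - |h (Fin.last n)| ≤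
      |(g i.castSucc + h i.castSucc) - h (Fin.last n)| := by
    intro i
    by_cases hi : ((i.castSucc : Fin (n+1)) : ℕ) < m
    · rw [hh i.castSucc hi, add_zero]
      exact abs_sub_abs_le_abs_sub _ _
    · rw [hg i.castSucc (le_of_not_gt hi), zero_add, abs_zero, zero_sub]
      have := abs_nonneg (h i.castSucc - h (Fin.last n))
      linarith [neg_abs_le (h (Fin.last n)), abs_nonneg (h (Fin.last n))]
  simp only [dualNorm, Pi.add_apply, hgL, sub_zero, abs_zero, mul_zero, add_zero, zero_add]
  by_cases hL : h (Fin.last n) = 0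
  · rw [hL]
    simp only [abs_zero, mul_zero, add_zero, sub_zero]
    obtain ⟨j, hj⟩ := Function.ne_iff.mp hne
    have hjn : (j : ℕ) < n := by
      rcases Nat.lt_succ_iff_lt_or_eq.mp j.isLt with h1 | h1
      · exact h1
      · exfalso; apply hj; have : j = Fin.last n := Fin.ext h1; simp [this, hL]
    have hcs : (⟨(j:ℕ), hjn⟩ : Fin n).castSucc = j := by
      ext; simp
    apply Finset.sum_lt_sum (fun i _ => by have := key i; rw [hL] at this; simpa using this)
    refine ⟨⟨(j:ℕ), hjn⟩, Finset.mem_univ _, ?_⟩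
    · rw [hcs]
      have hj' : h j ≠ 0 := fun e => hj (by simp [e])
      have hgj : g j = 0 := by
        apply hg; by_contra hc; exact hj' (hh j (lt_of_not_ge hc))
      simpa [hgj] using abs_pos.mpr hj' 
  · have hsum := Finset.sum_le_sum (fun i (_ : i ∈ Finset.univ) => key i)
    rw [Finset.sum_sub_distrib, Finset.sum_const, Finset.card_univ, Fintype.card_fin,
      nsmul_eq_mul] at hsum
    have hpos : 0 < |h (Fin.last n)| := abs_pos.mpr hL
    have hrw : ∀ i : Fin n, (g + h) i.castSucc = g i.castSucc + h i.castSucc := fun i => rfl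
    calc ∑ i : Fin n, |g i.castSucc|
        < (∑ i : Fin n, |g i.castSucc| - n * |h (Fin.last n)|) + (n+1) * |h (Fin.last n)| := by
          nlinarith
      _ ≤ (∑ i : Fin n, |(g i.castSucc + h i.castSucc) - h (Fin.last n)|) + (n+1) * |h (Fin.last n)| := by
          linarith
      _ = _ := by rfl
end

section
/- Let Y be a proximinal closed subspace of a real Banach space X and k ∈ ℕ. If Y is a k-Chebyshev subspace of X (i.e., dim P_Y(x) ≤ k − 1 for all x), then for every y⊥ ∈ S_{Y⊥} and every x ∈ S(X, y⊥), the affine dimension of (S(X, y⊥) − x) ∩ Y is less than k. -/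
/-!
Since `y⊥` annihilates `Y` and has norm one, `d(x, Y) ≥ y⊥(x) = 1 = ‖x‖`, so `0 ∈ P_Y(x)`.
If moreover `z ∈ S(X, y⊥)` and `z - x ∈ Y`, then `x - z ∈ Y` and `‖x - (x - z)‖ = ‖z‖ = 1`, so
`x - z ∈ P_Y(x)`. Hence `(S(X, y⊥) - x) ∩ Y ⊆ -P_Y(x)`, whose span is that of `P_Y(x) - 0`.
-/

open NormedSpace Metric Set

open Paper

namespace Paper

variable {X : Type*} [NormedAddCommGroup X] [NormedSpace ℝ X] {Y : Submodule ℝ X}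

theorem norm_apply_le_mul_infDist {f : StrongDual ℝ X} (hf : f ∈ ann Y) (x : X) :
    ‖f x‖ ≤ ‖f‖ * infDist x (Y : Set X) := by
  have : Nonempty (Y : Set X) := ⟨⟨0, Y.zero_mem⟩⟩
  rw [infDist_eq_iInf, Real.mul_iInf_of_nonneg (norm_nonneg f)]
  refine le_ciInf fun ⟨y, hy⟩ => ?_
  calc ‖f x‖ = ‖f (x - y)‖ := by rw [map_sub, hf y hy, sub_zero]
    _ ≤ ‖f‖ * dist x y := by rw [dist_eq_norm]; exact f.le_opNorm _

theorem infDist_eq_norm_of_mem_ann {f : StrongDual ℝ X} (hf : f ∈ ann Y) (hf1 : ‖f‖ = 1)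
    {x : X} (hfx : f x = ‖x‖) : infDist x (Y : Set X) = ‖x‖ := by
  refine le_antisymm ?_ ?_
  · simpa using infDist_le_dist_of_mem (x := x) Y.zero_mem
  · simpa [hfx, hf1] using norm_apply_le_mul_infDist hf x

theorem zero_mem_bestApprox_of_infDist_eq_norm {x : X} (hx : infDist x (Y : Set X) = ‖x‖) :
    (0 : X) ∈ bestApprox (Y : Set X) x :=
  ⟨Y.zero_mem, by rw [sub_zero, hx]⟩

theorem sub_image_sphere_inter_subset_neg_bestApprox {x : X}
    (h0 : (0 : X) ∈ bestApprox (Y : Set X) x) :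
    (· - x) '' sphere 0 ‖x‖ ∩ (Y : Set X) ⊆ -bestApprox (Y : Set X) x := by
  rintro _ ⟨⟨z, hz, rfl⟩, hzY⟩
  refine ⟨by simpa using Y.neg_mem hzY, ?_⟩
  rw [mem_sphere_zero_iff_norm] at hz
  rw [neg_sub, sub_sub_cancel, hz, ← h0.2, sub_zero]

end Paper

theorem stmt15_general {X : Type*} [NormedAddCommGroup X] [NormedSpace ℝ X]
    (Y : Submodule ℝ X) (k : ℕ)
    (hcheb : ∀ x : X, ∀ a ∈ bestApprox (Y : Set X) x,
      Module.rank ℝ ↥(Submodule.span ℝ ((· - a) '' bestApprox (Y : Set X) x)) < (k : Cardinal)) :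
    ∀ f : StrongDual ℝ X, f ∈ ann Y → ‖f‖ = 1 →
      ∀ x : X, ‖x‖ = 1 → f x = ‖f‖ →
        Module.rank ℝ ↥(Submodule.span ℝ
          (((· - x) '' {z : X | ‖z‖ = 1 ∧ f z = ‖f‖}) ∩ (Y : Set X))) < (k : Cardinal) := by
  intro f hf hf1 x hx hfx
  have h0 : (0 : X) ∈ bestApprox (Y : Set X) x :=
    zero_mem_bestApprox_of_infDist_eq_norm
      (infDist_eq_norm_of_mem_ann hf hf1 (by rw [hfx, hf1, hx]))
  have hface : {z : X | ‖z‖ = 1 ∧ f z = ‖f‖} ⊆ sphere 0 ‖x‖ := fun z hz => by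
    rw [mem_sphere_zero_iff_norm, hx, hz.1]
  have hspan : Submodule.span ℝ (((· - x) '' {z : X | ‖z‖ = 1 ∧ f z = ‖f‖}) ∩ (Y : Set X)) ≤
      Submodule.span ℝ ((· - (0 : X)) '' bestApprox (Y : Set X) x) := by
    calc _ ≤ Submodule.span ℝ (-bestApprox (Y : Set X) x) :=
          Submodule.span_mono <| (inter_subset_inter_left _ (image_mono hface)).trans
            (sub_image_sphere_inter_subset_neg_bestApprox h0)
      _ = _ := by rw [Submodule.span_neg]; simp only [sub_zero, image_id']
  exact (Submodule.rank_mono hspan).trans_lt (hcheb x 0 h0)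

/-- if a proximinal closed subspace `Y` is `k`-Chebyshev in `X`
(`dim P_Y(x) ≤ k−1` for all `x`), then for every `y⊥ ∈ S_{Y⊥}` and every
`x ∈ S(X, y⊥) = {x ∈ S_X : y⊥(x) = ‖y⊥‖}`, the dimension of `(S(X, y⊥) − x) ∩ Y` is less
than `k`. -/
theorem stmt15 {X : Type*} [NormedAddCommGroup X] [NormedSpace ℝ X] [CompleteSpace X]
    (Y : Submodule ℝ X) (hYc : IsClosed (Y : Set X)) (k : ℕ)
    (prox : ∀ x : X, (bestApprox (Y : Set X) x).Nonempty)
    (hcheb : ∀ x : X, ∀ a ∈ bestApprox (Y : Set X) x,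
      Module.rank ℝ ↥(Submodule.span ℝ ((· - a) '' bestApprox (Y : Set X) x)) < (k : Cardinal)) :
    ∀ f : StrongDual ℝ X, f ∈ ann Y → ‖f‖ = 1 →
      ∀ x : X, ‖x‖ = 1 → f x = ‖f‖ →
        Module.rank ℝ ↥(Submodule.span ℝ
          (((· - x) '' {z : X | ‖z‖ = 1 ∧ f z = ‖f‖}) ∩ (Y : Set X))) < (k : Cardinal) :=
  stmt15_general Y k hcheb
end

section
/- Let Y be a closed subspace of a real Banach space X such that every point of S_Y is a k-smooth point of X (i.e., dim S(X*, y) ≤ k − 1 for all y ∈ S_Y). Then every reflexive closed subspace Z of Y has property-(k-U) in X. -/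
/-! A norm-one functional `g` on a reflexive `Z` attains its norm at some `z₀ ∈ S_Z`. Every
norm-preserving extension of `g` then lies in `S(X*, z₀)`, and `z₀ ∈ S_Y` is `k`-smooth. -/

open NormedSpace Metric Set

open Paper

namespace Paper

/-- Property-(k-U): every norm-one functional on `Y` has a set of norm-preserving
extensions to `X` of dimension at most `k − 1`. -/
def propkU {X : Type*} [NormedAddCommGroup X] [NormedSpace ℝ X]
    (Y : Submodule ℝ X) (k : ℕ) : Prop :=
  ∀ g : StrongDual ℝ ↥Y, ‖g‖ = 1 → ∀ f ∈ HB Y g,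
    Module.rank ℝ ↥(Submodule.span ℝ ((· - f) '' HB Y g)) < (k : Cardinal)

end Paper

namespace Paper

theorem exists_norm_eq_one_apply_eq_norm_of_surjective_inclusionInDoubleDual
    {𝕜 E : Type*} [RCLike 𝕜] [NormedAddCommGroup E] [NormedSpace 𝕜 E]
    (hrefl : Function.Surjective (inclusionInDoubleDual 𝕜 E)) {g : StrongDual 𝕜 E} (hg : g ≠ 0) :
    ∃ z : E, ‖z‖ = 1 ∧ g z = ‖g‖ := by
  obtain ⟨Ψ, hΨ, hΨg⟩ := exists_dual_vector 𝕜 g (norm_ne_zero_iff.mpr hg)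
  obtain ⟨z, rfl⟩ := hrefl Ψ
  refine ⟨z, ?_, hΨg⟩
  rw [← hΨ]
  exact ((inclusionInDoubleDualLi 𝕜).norm_map z).symm

variable {X : Type*} [NormedAddCommGroup X] [NormedSpace ℝ X]

/-- The paper's `S(X*, x)`. -/
def normingSet (x : X) : Set (StrongDual ℝ X) := {φ | ‖φ‖ = 1 ∧ φ x = ‖x‖}

theorem HB_subset_normingSet {Z : Submodule ℝ X} {g : StrongDual ℝ Z} (hg : ‖g‖ = 1)
    {z : Z} (hgz : g z = ‖z‖) : HB Z g ⊆ normingSet (z : X) :=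
  fun _ ⟨hext, hnorm⟩ => ⟨hnorm.trans hg, (hext z).trans hgz⟩

end Paper

theorem stmt19_general {X : Type*} [NormedAddCommGroup X] [NormedSpace ℝ X]
    (Y : Submodule ℝ X) (k : ℕ)
    (hsmooth : ∀ y : X, y ∈ Y → ‖y‖ = 1 →
      ∀ f : StrongDual ℝ X, ‖f‖ = 1 → f y = ‖y‖ →
        Module.rank ℝ ↥(Submodule.span ℝ
          ((· - f) '' {φ : StrongDual ℝ X | ‖φ‖ = 1 ∧ φ y = ‖y‖})) < (k : Cardinal)) :
    ∀ Z : Submodule ℝ X, Z ≤ Y → IsClosed (Z : Set X) →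
      Function.Surjective (inclusionInDoubleDual ℝ ↥Z) → propkU Z k := by
  intro Z hZY _ hrefl g hg f hf
  have hg0 : g ≠ 0 := by
    rintro rfl
    simp only [ContinuousLinearMap.opNorm_zero, zero_ne_one] at hg
  obtain ⟨z, hz, hgz⟩ :=
    exists_norm_eq_one_apply_eq_norm_of_surjective_inclusionInDoubleDual hrefl hg0
  have hsub : HB Z g ⊆ normingSet (z : X) :=
    HB_subset_normingSet hg (by rw [hgz, hg, hz]; norm_num)
  calc Module.rank ℝ ↥(Submodule.span ℝ ((· - f) '' HB Z g))
      ≤ Module.rank ℝ ↥(Submodule.span ℝ ((· - f) '' normingSet (z : X))) :=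
        Submodule.rank_mono (Submodule.span_mono (image_mono hsub))
    _ < k := hsmooth z (hZY z.2) hz f (hsub hf).1 (hsub hf).2

/-- if every point of `S_Y` is a `k`-smooth point of `X`
(`dim S(X*, y) ≤ k − 1` where `S(X*, y) = {f ∈ S_{X*} : f(y) = ‖y‖}`), then every
reflexive closed subspace `Z` of `Y` has property-(k-U) in `X`. -/
theorem stmt19 {X : Type*} [NormedAddCommGroup X] [NormedSpace ℝ X] [CompleteSpace X]
    (Y : Submodule ℝ X) (hYc : IsClosed (Y : Set X)) (k : ℕ)
    (hsmooth : ∀ y : X, y ∈ Y → ‖y‖ = 1 →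
      ∀ f : StrongDual ℝ X, ‖f‖ = 1 → f y = ‖y‖ →
        Module.rank ℝ ↥(Submodule.span ℝ
          ((· - f) '' {φ : StrongDual ℝ X | ‖φ‖ = 1 ∧ φ y = ‖y‖})) < (k : Cardinal)) :
    ∀ Z : Submodule ℝ X, Z ≤ Y → IsClosed (Z : Set X) →
      Function.Surjective (inclusionInDoubleDual ℝ ↥Z) → propkU Z k :=
  stmt19_general Y k hsmooth
end
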